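/- If a branching conjunction ⋀({(α)φ'} ∪ Ψ) of HML_srbb distinguishes a process p from a set Q (with respect to ⟦·⟧^ε), then for any p' with p →(α) p' and p' ∈ ⟦φ'⟧, taking Q_α = {q ∈ Q | q ∉ ⟦(α)φ'⟧^∧}, we have expr^ε(⋀({(α)φ'} ∪ Ψ)) ∈ Win_a((p,α,p',Q∖Q_α,Q_α)^η_d) in the weak spectroscopy energy game G△. -/

import Mathlib

open Classical

noncomputable section

namespace Spectroscopy

/-! ### Energies and declining energy games -/

/-- Energies: 8-dimensional vectors over `ℕ ∪ {∞}`, ordered componentwise. -/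
abbrev Energy : Type := Fin 8 → ℕ∞

/-- The `i`-th unit vector. -/
def unitE (i : Fin 8) : Energy := fun k => if k = i then 1 else 0

/-- The vector with value `v` at position `i` and `0` elsewhere. -/
def onlyAt (i : Fin 8) (v : ℕ∞) : Energy := fun k => if k = i then v else 0

/-- Components of energy updates: `-1`, `0`, or minimum selection `min_D`.
For the component at position `k`, `minWith D` selects the minimum over the
positions `{k} ∪ D`, so the requirement `k ∈ D` of the paper holds by
construction. -/
inductive UpdComp : Type
  | decr : UpdComp
  | zero : UpdComp
  | minWith (D : Finset (Fin 8)) : UpdComp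
deriving DecidableEq

/-- Energy updates. -/
abbrev Update : Type := Fin 8 → UpdComp

/-- Partial application of an update to an energy (`none` when a component
would become negative). -/
def upd (e : Energy) (u : Update) : Option Energy :=
  if ∀ k, u k = UpdComp.decr → e k ≠ 0 then
    some (fun k =>
      match u k with
      | UpdComp.decr => e k - 1
      | UpdComp.zero => e k
      | UpdComp.minWith D => (insert k D).inf e)
  else none

/-- A declining energy game: positions, a defender predicate (attacker
positions are the non-defender ones), and moves labeled with updates. -/
structure EGame (Pos : Type) where
  defender : Pos → Prop
  move : Pos → Update → Pos → Prop

/-- Attacker winning budgets `Win_a`: at an attacker position some move must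
lead to an attacker-won position under the updated energy; at a defender
position every move must (be defined and) lead to an attacker-won position. -/
inductive EGame.Win {Pos : Type} (G : EGame Pos) : Pos → Energy → Prop
  | attack {g : Pos} {u : Update} {g' : Pos} {e e' : Energy} :
      ¬ G.defender g → G.move g u g' → upd e u = some e' → G.Win g' e' →
      G.Win g e
  | defend {g : Pos} {e : Energy} :
      G.defender g →
      (∀ u g', G.move g u g' → upd e u ≠ none) →
      (∀ u g' e', G.move g u g' → upd e u = some e' → G.Win g' e') →
      G.Win g e

/-! ### Labeled transition systems with silent steps -/

section LTS

variable {Proc Act : Type}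

/-- Weak internal steps `↠`: reflexive-transitive closure of `τ`-steps. -/
def Star (Tr : Proc → Act → Proc → Prop) (τ : Act) : Proc → Proc → Prop :=
  Relation.ReflTransGen fun p p' => Tr p τ p'

/-- A process is stable if it has no `τ`-step. -/
def Stable (Tr : Proc → Act → Proc → Prop) (τ : Act) (p : Proc) : Prop :=
  ∀ p', ¬ Tr p τ p'

/-- Optional step `p →(α) p'`: a real `α`-step, or `α = τ` and `p = p'`. -/
def OptStep (Tr : Proc → Act → Proc → Prop) (τ : Act) (p : Proc) (α : Act) (p' : Proc) : Prop :=
  Tr p α p' ∨ (α = τ ∧ p = p')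

/-- Lift of `→a` to sets. -/
def SetStep (Tr : Proc → Act → Proc → Prop) (Q : Set Proc) (a : Act) (Q' : Set Proc) : Prop :=
  Q' = {q' | ∃ q ∈ Q, Tr q a q'}

/-- Lift of `↠` to sets. -/
def SetStar (Tr : Proc → Act → Proc → Prop) (τ : Act) (Q Q' : Set Proc) : Prop :=
  Q' = {q' | ∃ q ∈ Q, Star Tr τ q q'}

/-- Lift of `→(α)` to sets. -/
def SetOpt (Tr : Proc → Act → Proc → Prop) (τ : Act) (Q : Set Proc) (α : Act)
    (Q' : Set Proc) : Prop :=
  Q' = {q' | ∃ q ∈ Q, OptStep Tr τ q α q'}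

end LTS

/-! ### The logic HML_srbb -/

mutual
/-- Formulas `φ` of HML_srbb: `⟨ε⟩χ` or immediate conjunctions `⋀Ψ`
(conjunctions are indexed by an arbitrary type). `⊤` is the empty conjunction. -/
inductive Formula (Act : Type) (τ : Act) : Type 1
  | delayed : DFormula Act τ → Formula Act τ
  | conj : (I : Type) → (I → Conjunct Act τ) → Formula Act τ

/-- Delayed formulas `χ`: observations `⟨a⟩φ` (with `a ≠ τ`), standard
conjunctions `⋀Ψ`, stable conjunctions `⋀({¬⟨τ⟩⊤} ∪ Ψ)`, and branching
conjunctions `⋀({(α)φ} ∪ Ψ)`. -/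
inductive DFormula (Act : Type) (τ : Act) : Type 1
  | obs : (a : Act) → a ≠ τ → Formula Act τ → DFormula Act τ
  | conj : (I : Type) → (I → Conjunct Act τ) → DFormula Act τ
  | stableConj : (I : Type) → (I → Conjunct Act τ) → DFormula Act τ
  | branchConj : (α : Act) → Formula Act τ → (I : Type) → (I → Conjunct Act τ) → DFormula Act τ

/-- Conjuncts `ψ`: positive `⟨ε⟩χ` or negative `¬⟨ε⟩χ`. -/
inductive Conjunct (Act : Type) (τ : Act) : Type 1
  | pos : DFormula Act τ → Conjunct Act τ
  | neg : DFormula Act τ → Conjunct Act τ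
end

section Semantics

variable {Proc Act : Type}

mutual
/-- Semantics `⟦φ⟧`. -/
def Sat (Tr : Proc → Act → Proc → Prop) (τ : Act) (p : Proc) : Formula Act τ → Prop
  | .delayed χ => ∃ p', Star Tr τ p p' ∧ SatD Tr τ p' χ
  | .conj _ ps => ∀ i, SatC Tr τ p (ps i)

/-- Semantics `⟦χ⟧^ε` of delayed formulas. -/
def SatD (Tr : Proc → Act → Proc → Prop) (τ : Act) (p : Proc) : DFormula Act τ → Prop
  | .obs a _ φ => ∃ p', Tr p a p' ∧ Sat Tr τ p' φ
  | .conj _ ps => ∀ i, SatC Tr τ p (ps i)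
  | .stableConj _ ps => Stable Tr τ p ∧ ∀ i, SatC Tr τ p (ps i)
  | .branchConj α φ _ ps =>
      (∃ p', OptStep Tr τ p α p' ∧ Sat Tr τ p' φ) ∧ ∀ i, SatC Tr τ p (ps i)

/-- Semantics `⟦ψ⟧^∧` of conjuncts. -/
def SatC (Tr : Proc → Act → Proc → Prop) (τ : Act) (p : Proc) : Conjunct Act τ → Prop
  | .pos χ => ∃ p', Star Tr τ p p' ∧ SatD Tr τ p' χ
  | .neg χ => ¬ ∃ p', Star Tr τ p p' ∧ SatD Tr τ p' χ
end

/-- `φ` distinguishes `p` from the set `Q`. -/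
def Distinguishes (Tr : Proc → Act → Proc → Prop) (τ : Act) (φ : Formula Act τ)
    (p : Proc) (Q : Set Proc) : Prop :=
  Sat Tr τ p φ ∧ ∀ q ∈ Q, ¬ Sat Tr τ q φ

/-- The delayed formula `χ` distinguishes `p` from the set `Q` w.r.t. `⟦·⟧^ε`. -/
def DistinguishesD (Tr : Proc → Act → Proc → Prop) (τ : Act) (χ : DFormula Act τ)
    (p : Proc) (Q : Set Proc) : Prop :=
  SatD Tr τ p χ ∧ ∀ q ∈ Q, ¬ SatD Tr τ q χ

/-- The conjunct `ψ` distinguishes `p` from `q` w.r.t. `⟦·⟧^∧`. -/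
def DistinguishesC (Tr : Proc → Act → Proc → Prop) (τ : Act) (ψ : Conjunct Act τ)
    (p q : Proc) : Prop :=
  SatC Tr τ p ψ ∧ ¬ SatC Tr τ q ψ

/-- Stability-respecting branching bisimulations: symmetric relations with the
branching-bisimulation transfer property and the stability-respecting
property. -/
def IsSRBBisim (Tr : Proc → Act → Proc → Prop) (τ : Act) (R : Proc → Proc → Prop) : Prop :=
  Symmetric R ∧
  (∀ p q, R p q → ∀ α p', Tr p α p' →
    (α = τ ∧ R p' q) ∨
      ∃ q' q'', Star Tr τ q q' ∧ Tr q' α q'' ∧ R p q' ∧ R p' q'') ∧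
  (∀ p q, R p q → Stable Tr τ p →
    ∃ q', Star Tr τ q q' ∧ Stable Tr τ q' ∧ R p q')

end Semantics

/-! ### Expressiveness prices -/

section Expr

variable {Act : Type} {τ : Act}

mutual
/-- Expressiveness price `expr` of formulas. -/
def exprF : Formula Act τ → Energy
  | .delayed χ => exprE χ
  | .conj I ps => ⨆ _ : Nonempty I, ((unitE 4 + unitE 2) + ⨆ i, exprC (ps i))

/-- Expressiveness price `expr^ε` of delayed formulas. -/
def exprE : DFormula Act τ → Energy
  | .obs _ _ φ => unitE 0 + exprF φ
  | .conj I ps => ⨆ _ : Nonempty I, (unitE 2 + ⨆ i, exprC (ps i))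
  | .stableConj _ ps => unitE 3 + ⨆ i, exprC (ps i)
  | .branchConj _ φ _ ps =>
      (unitE 1 + unitE 2) +
        (((unitE 0 + exprF φ) ⊔ onlyAt 5 (1 + exprF φ 0)) ⊔ ⨆ i, exprC (ps i))

/-- Expressiveness price `expr^∧` of conjuncts. -/
def exprC : Conjunct Act τ → Energy
  | .pos χ => exprE χ ⊔ onlyAt 5 (exprE χ 0)
  | .neg χ => (unitE 7 + exprE χ) ⊔ onlyAt 6 (exprE χ 0)
end

end Expr

/-! ### The weak spectroscopy energy game -/

/-- Positions of the weak spectroscopy game. -/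
inductive GPos (Proc Act : Type) : Type
  | att (p : Proc) (Q : Set Proc)                                 -- `[p,Q]_a`
  | attD (p : Proc) (Q : Set Proc)                                -- `[p,Q]^ε_a`
  | attC (p q : Proc)                                             -- `[p,q]^∧_a`
  | attB (p : Proc) (Q : Set Proc)                                -- `[p,Q]^η_a`
  | defC (p : Proc) (Q : Set Proc)                                -- `(p,Q)_d`
  | defS (p : Proc) (Q : Set Proc)                                -- `(p,Q)^s_d`
  | defB (p : Proc) (α : Act) (p' : Proc) (Q Qa : Set Proc)       -- `(p,α,p',Q,Qa)^η_d`

/-- The zero update. -/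
def zeroU : Update := fun _ => UpdComp.zero

/-- The update `-ê_i`. -/
def decU (i : Fin 8) : Update := fun k => if k = i then UpdComp.decr else UpdComp.zero

/-- The update `(min_{1,6},0,0,0,0,0,0,0)`. -/
def minU16 : Update := fun k => if k = 0 then UpdComp.minWith {5} else UpdComp.zero

/-- The update `(min_{1,7},0,0,0,0,0,0,-1)`. -/
def minU17dec8 : Update := fun k =>
  if k = 0 then UpdComp.minWith {6} else if k = 7 then UpdComp.decr else UpdComp.zero

/-- The update `(0,-1,-1,0,0,0,0,0)`. -/
def dec23 : Update := fun k => if k = 1 ∨ k = 2 then UpdComp.decr else UpdComp.zero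

/-- The update `(min_{1,6},-1,-1,0,0,0,0,0)`. -/
def minU16dec23 : Update := fun k =>
  if k = 0 then UpdComp.minWith {5}
  else if k = 1 ∨ k = 2 then UpdComp.decr else UpdComp.zero

section Game

variable {Proc Act : Type}

/-- Moves of the weak spectroscopy game. -/
inductive GMove (Tr : Proc → Act → Proc → Prop) (τ : Act) :
    GPos Proc Act → Update → GPos Proc Act → Prop
  | delay {p : Proc} {Q Q' : Set Proc} :
      SetStar Tr τ Q Q' →
      GMove Tr τ (.att p Q) zeroU (.attD p Q')
  | procrastination {p p' : Proc} {Q : Set Proc} :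
      Tr p τ p' → p ≠ p' →
      GMove Tr τ (.attD p Q) zeroU (.attD p' Q)
  | observation {p p' : Proc} {a : Act} {Q Q' : Set Proc} :
      Tr p a p' → a ≠ τ → SetStep Tr Q a Q' →
      GMove Tr τ (.attD p Q) (decU 0) (.att p' Q')
  | finishing {p : Proc} :
      GMove Tr τ (.att p ∅) zeroU (.defC p ∅)
  | immediateConj {p : Proc} {Q : Set Proc} :
      Q ≠ ∅ →
      GMove Tr τ (.att p Q) (decU 4) (.defC p Q)
  | lateConj {p : Proc} {Q : Set Proc} :
      GMove Tr τ (.attD p Q) zeroU (.defC p Q)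
  | conjAnswer {p q : Proc} {Q : Set Proc} :
      q ∈ Q →
      GMove Tr τ (.defC p Q) (decU 2) (.attC p q)
  | posConjunct {p q : Proc} {Q : Set Proc} :
      SetStar Tr τ {q} Q →
      GMove Tr τ (.attC p q) minU16 (.attD p Q)
  | negConjunct {p q : Proc} {Q : Set Proc} :
      SetStar Tr τ {p} Q → p ≠ q →
      GMove Tr τ (.attC p q) minU17dec8 (.attD q Q)
  | stableConj {p : Proc} {Q : Set Proc} :
      Stable Tr τ p →
      GMove Tr τ (.attD p Q) zeroU (.defS p {q ∈ Q | Stable Tr τ q})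
  | conjStableAnswer {p q : Proc} {Q : Set Proc} :
      q ∈ Q →
      GMove Tr τ (.defS p Q) (decU 3) (.attC p q)
  | stableFinishing {p : Proc} :
      GMove Tr τ (.defS p ∅) (decU 3) (.defC p ∅)
  | branchConj {p p' : Proc} {α : Act} {Q Qa : Set Proc} :
      OptStep Tr τ p α p' → Qa ⊆ Q →
      GMove Tr τ (.attD p Q) zeroU (.defB p α p' (Q \ Qa) Qa)
  | branchAnswer {p p' q : Proc} {α : Act} {Q Qa : Set Proc} :
      q ∈ Q →
      GMove Tr τ (.defB p α p' Q Qa) dec23 (.attC p q)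
  | branchObservation {p p' : Proc} {α : Act} {Q Qa Q' : Set Proc} :
      SetOpt Tr τ Qa α Q' →
      GMove Tr τ (.defB p α p' Q Qa) minU16dec23 (.attB p' Q')
  | branchAccounting {p : Proc} {Q : Set Proc} :
      GMove Tr τ (.attB p Q) (decU 0) (.att p Q)

/-- Defender positions of the weak spectroscopy game. -/
def isDefender : GPos Proc Act → Prop
  | .defC _ _ => True
  | .defS _ _ => True
  | .defB _ _ _ _ _ => True
  | _ => False

/-- The weak spectroscopy energy game `G△`. -/
def specGame (Tr : Proc → Act → Proc → Prop) (τ : Act) : EGame (GPos Proc Act) where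
  defender := isDefender
  move := GMove Tr τ

end Game

/-! ### Strategy formulas -/

section Strat

variable {Proc Act : Type}

mutual
/-- Attacker strategy formulas (formula sort). -/
inductive StratF (Tr : Proc → Act → Proc → Prop) (τ : Act) :
    GPos Proc Act → Energy → Formula Act τ → Prop
  | delay {p : Proc} {Q Q' : Set Proc} {u : Update} {e e' : Energy} {χ : DFormula Act τ} :
      GMove Tr τ (.att p Q) u (.attD p Q') →
      upd e u = some e' →
      (specGame Tr τ).Win (.attD p Q') e' →
      StratD Tr τ (.attD p Q') e' χ →
      StratF Tr τ (.att p Q) e (.delayed χ)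
  | immediateConj {p : Proc} {Q : Set Proc} {u : Update} {e e' : Energy}
      {I : Type} {ps : I → Conjunct Act τ} :
      GMove Tr τ (.att p Q) u (.defC p Q) →
      upd e u = some e' →
      (specGame Tr τ).Win (.defC p Q) e' →
      StratD Tr τ (.defC p Q) e' (.conj I ps) →
      StratF Tr τ (.att p Q) e (.conj I ps)

/-- Attacker strategy formulas (delayed-formula sort). -/
inductive StratD (Tr : Proc → Act → Proc → Prop) (τ : Act) :
    GPos Proc Act → Energy → DFormula Act τ → Prop
  | procrastination {p p' : Proc} {Q : Set Proc} {u : Update} {e e' : Energy}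
      {χ : DFormula Act τ} :
      GMove Tr τ (.attD p Q) u (.attD p' Q) →
      upd e u = some e' →
      (specGame Tr τ).Win (.attD p' Q) e' →
      StratD Tr τ (.attD p' Q) e' χ →
      StratD Tr τ (.attD p Q) e χ
  | observation {p p' : Proc} {a : Act} {Q Q' : Set Proc} {u : Update} {e e' : Energy}
      {φ : Formula Act τ} (ha : a ≠ τ) :
      GMove Tr τ (.attD p Q) u (.att p' Q') →
      Tr p a p' → SetStep Tr Q a Q' →
      upd e u = some e' →
      (specGame Tr τ).Win (.att p' Q') e' →
      StratF Tr τ (.att p' Q') e' φ →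
      StratD Tr τ (.attD p Q) e (.obs a ha φ)
  | lateConj {p : Proc} {Q : Set Proc} {u : Update} {e e' : Energy} {χ : DFormula Act τ} :
      GMove Tr τ (.attD p Q) u (.defC p Q) →
      upd e u = some e' →
      (specGame Tr τ).Win (.defC p Q) e' →
      StratD Tr τ (.defC p Q) e' χ →
      StratD Tr τ (.attD p Q) e χ
  | stable {p : Proc} {Q Q' : Set Proc} {u : Update} {e e' : Energy} {χ : DFormula Act τ} :
      GMove Tr τ (.attD p Q) u (.defS p Q') →
      upd e u = some e' →
      (specGame Tr τ).Win (.defS p Q') e' →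
      StratD Tr τ (.defS p Q') e' χ →
      StratD Tr τ (.attD p Q) e χ
  | branch {p p' : Proc} {α : Act} {Q Q' Qa : Set Proc} {u : Update} {e e' : Energy}
      {χ : DFormula Act τ} :
      GMove Tr τ (.attD p Q) u (.defB p α p' Q' Qa) →
      upd e u = some e' →
      (specGame Tr τ).Win (.defB p α p' Q' Qa) e' →
      StratD Tr τ (.defB p α p' Q' Qa) e' χ →
      StratD Tr τ (.attD p Q) e χ
  | conj {p : Proc} {Q : Set Proc} {e : Energy}
      (us : {q // q ∈ Q} → Update) (es : {q // q ∈ Q} → Energy)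
      (ψs : {q // q ∈ Q} → Conjunct Act τ) :
      (∀ qq : {q // q ∈ Q}, GMove Tr τ (.defC p Q) (us qq) (.attC p qq.1)) →
      (∀ qq : {q // q ∈ Q}, upd e (us qq) = some (es qq)) →
      (∀ qq : {q // q ∈ Q}, (specGame Tr τ).Win (.attC p qq.1) (es qq)) →
      (∀ qq : {q // q ∈ Q}, StratC Tr τ (.attC p qq.1) (es qq) (ψs qq)) →
      StratD Tr τ (.defC p Q) e (.conj {q // q ∈ Q} ψs)
  | stableConj {p : Proc} {Q : Set Proc} {e : Energy}
      (hne : Q.Nonempty)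
      (us : {q // q ∈ Q} → Update) (es : {q // q ∈ Q} → Energy)
      (ψs : {q // q ∈ Q} → Conjunct Act τ) :
      (∀ qq : {q // q ∈ Q}, GMove Tr τ (.defS p Q) (us qq) (.attC p qq.1)) →
      (∀ qq : {q // q ∈ Q}, upd e (us qq) = some (es qq)) →
      (∀ qq : {q // q ∈ Q}, (specGame Tr τ).Win (.attC p qq.1) (es qq)) →
      (∀ qq : {q // q ∈ Q}, StratC Tr τ (.attC p qq.1) (es qq) (ψs qq)) →
      StratD Tr τ (.defS p Q) e (.stableConj {q // q ∈ Q} ψs)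
  | stableFinish {p : Proc} {u : Update} {e e' : Energy} :
      GMove Tr τ (.defS p ∅) u (.defC p ∅) →
      upd e u = some e' →
      (specGame Tr τ).Win (.defC p (∅ : Set Proc)) e' →
      StratD Tr τ (.defS p ∅) e (.stableConj Empty fun x => x.elim)
  | branchConj {p p' : Proc} {α : Act} {Q Qa Q' : Set Proc} {ua ua' : Update}
      {e e1 ea : Energy} {φa : Formula Act τ}
      (us : {q // q ∈ Q} → Update) (es : {q // q ∈ Q} → Energy)
      (ψs : {q // q ∈ Q} → Conjunct Act τ) :
      GMove Tr τ (.defB p α p' Q Qa) ua (.attB p' Q') →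
      GMove Tr τ (.attB p' Q') ua' (.att p' Q') →
      upd e ua = some e1 →
      upd e1 ua' = some ea →
      (specGame Tr τ).Win (.att p' Q') ea →
      StratF Tr τ (.att p' Q') ea φa →
      (∀ qq : {q // q ∈ Q}, GMove Tr τ (.defB p α p' Q Qa) (us qq) (.attC p qq.1)) →
      (∀ qq : {q // q ∈ Q}, upd e (us qq) = some (es qq)) →
      (∀ qq : {q // q ∈ Q}, (specGame Tr τ).Win (.attC p qq.1) (es qq)) →
      (∀ qq : {q // q ∈ Q}, StratC Tr τ (.attC p qq.1) (es qq) (ψs qq)) →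
      StratD Tr τ (.defB p α p' Q Qa) e (.branchConj α φa {q // q ∈ Q} ψs)

/-- Attacker strategy formulas (conjunct sort). -/
inductive StratC (Tr : Proc → Act → Proc → Prop) (τ : Act) :
    GPos Proc Act → Energy → Conjunct Act τ → Prop
  | pos {p q : Proc} {Q' : Set Proc} {u : Update} {e e' : Energy} {χ : DFormula Act τ} :
      GMove Tr τ (.attC p q) u (.attD p Q') →
      upd e u = some e' →
      (specGame Tr τ).Win (.attD p Q') e' →
      StratD Tr τ (.attD p Q') e' χ →
      StratC Tr τ (.attC p q) e (.pos χ)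
  | neg {p q : Proc} {P' : Set Proc} {u : Update} {e e' : Energy} {χ : DFormula Act τ} :
      GMove Tr τ (.attC p q) u (.attD q P') →
      upd e u = some e' →
      (specGame Tr τ).Win (.attD q P') e' →
      StratD Tr τ (.attD q P') e' χ →
      StratC Tr τ (.attC p q) e (.neg χ)
end

end Strat

/-!
A distinguishing formula is read as an attacker strategy, by mutual induction on its three
sorts: `⟨ε⟩` becomes delay and procrastination moves, `⟨a⟩` an observation, and each
conjunction a conjunction move whose answers are refuted by the conjuncts that fail there. The
price of every constructor adds exactly the unit vectors that these moves subtract, and its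
`sup` with `onlyAt 5` resp. `onlyAt 6` covers the `min` components of the conjunct moves.
-/

theorem _root_.ENat.one_add_tsub_one (a : ℕ∞) : 1 + a - 1 = a :=
  (ENat.addLECancellable_of_ne_top ENat.one_ne_top).add_tsub_cancel_left

theorem upd_mono {e f e' : Energy} {u : Update} (h : upd e u = some e') (hle : e ≤ f) :
    ∃ f', upd f u = some f' ∧ e' ≤ f' := by
  unfold upd at h ⊢
  split_ifs at h with hdef
  have hdef' : ∀ k, u k = UpdComp.decr → f k ≠ 0 := fun k hk hf =>
    hdef k hk (nonpos_iff_eq_zero.mp (hf ▸ hle k))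
  refine ⟨_, if_pos hdef', fun k => ?_⟩
  cases Option.some_inj.mp h
  dsimp only
  cases u k
  · exact tsub_le_tsub_right (hle k) 1
  · exact hle k
  · exact Finset.inf_mono_fun fun i _ => hle i

theorem upd_zeroU (e : Energy) : upd e zeroU = some e := by
  rw [upd, if_pos] <;> simp [zeroU]

theorem upd_decU_unitE_add (i : Fin 8) (x : Energy) : upd (unitE i + x) (decU i) = some x := by
  rw [upd, if_pos]
  · congr 1; funext k
    by_cases hk : k = i
    · subst hk; simp [decU, unitE, ENat.one_add_tsub_one]
    · simp [decU, unitE, hk]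
  · intro k hk
    by_cases h : k = i
    · subst h; simp [unitE]
    · simp [decU, h] at hk

theorem upd_dec23 (x : Energy) : upd (unitE 1 + unitE 2 + x) dec23 = some x := by
  rw [upd, if_pos]
  · congr 1; funext k
    fin_cases k <;> simp [dec23, unitE, ENat.one_add_tsub_one]
  · intro k hk
    fin_cases k <;> simp_all [dec23, unitE]

theorem upd_minU16 (x : Energy) :
    upd (x ⊔ onlyAt 5 (x 0)) minU16 = some (x ⊔ onlyAt 5 (x 0)) := by
  rw [upd, if_pos]
  · congr 1; funext k
    fin_cases k <;> simp [minU16, onlyAt]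
  · intro k hk
    fin_cases k <;> simp_all [minU16]

theorem upd_minU17dec8 (x : Energy) :
    upd ((unitE 7 + x) ⊔ onlyAt 6 (x 0)) minU17dec8 = some (x ⊔ onlyAt 6 (x 0)) := by
  rw [upd, if_pos]
  · congr 1; funext k
    fin_cases k <;> simp [minU17dec8, onlyAt, unitE, ENat.one_add_tsub_one]
  · intro k hk
    fin_cases k <;> simp_all [minU17dec8, unitE]

theorem upd_minU16dec23 (y : Energy) :
    upd (unitE 1 + unitE 2 + y) minU16dec23 = upd y minU16 := by
  rw [upd, upd, if_pos, if_pos]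
  · congr 1; funext k
    fin_cases k <;> simp [minU16dec23, minU16, unitE, ENat.one_add_tsub_one]
  all_goals intro k hk; fin_cases k <;> simp_all [minU16dec23, minU16, unitE]

namespace EGame

variable {Pos : Type} {G : EGame Pos}

theorem Win.of_defender {g : Pos} {e : Energy} (hd : G.defender g)
    (h : ∀ u g', G.move g u g' → ∃ e', upd e u = some e' ∧ G.Win g' e') : G.Win g e := by
  refine .defend hd (fun u g' hm => ?_) (fun u g' e' hm hu => ?_)
  · obtain ⟨e', he, -⟩ := h u g' hm
    simp [he]
  · obtain ⟨e'', he, hw⟩ := h u g' hm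
    rwa [← Option.some_inj.mp (hu.symm.trans he)] at hw

theorem Win.mono {g : Pos} {e f : Energy} (h : G.Win g e) (hle : e ≤ f) : G.Win g f := by
  induction h generalizing f with
  | attack hd hm hu _ ih =>
    obtain ⟨f', hf', hle'⟩ := upd_mono hu hle
    exact .attack hd hm hf' (ih hle')
  | defend hd hdef _ ih =>
    refine .of_defender hd fun u g' hm => ?_
    obtain ⟨e', he'⟩ := Option.ne_none_iff_exists'.mp (hdef u g' hm)
    obtain ⟨f', hf', hle'⟩ := upd_mono he' hle
    exact ⟨f', hf', ih u g' e' hm he' hle'⟩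

end EGame

section Game

variable {Proc Act : Type} {Tr : Proc → Act → Proc → Prop} {τ : Act}

theorem win_attD_of_star {p p' : Proc} {Q : Set Proc} {e : Energy} (h : Star Tr τ p p')
    (hw : (specGame Tr τ).Win (.attD p' Q) e) : (specGame Tr τ).Win (.attD p Q) e := by
  induction h using Relation.ReflTransGen.head_induction_on with
  | refl => exact hw
  | @head r s hrs _ ih =>
    by_cases hr : r = s
    · exact hr ▸ ih
    · exact .attack id (.procrastination hrs hr) (upd_zeroU _) ih

theorem win_defC_empty (p : Proc) (e : Energy) :
    (specGame Tr τ).Win (.defC p (∅ : Set Proc)) e :=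
  .of_defender trivial fun _ _ hm => by
    cases hm with
    | conjAnswer hq => exact absurd hq (Set.notMem_empty _)

theorem win_defC_of_forall {p : Proc} {Q : Set Proc} {S : Energy}
    (h : ∀ q ∈ Q, (specGame Tr τ).Win (.attC p q) S) :
    (specGame Tr τ).Win (.defC p Q) (unitE 2 + S) :=
  .of_defender trivial fun _ _ hm => by
    cases hm with
    | conjAnswer hq => exact ⟨S, upd_decU_unitE_add 2 S, h _ hq⟩

theorem win_defS_of_forall {p : Proc} {Q : Set Proc} {S : Energy}
    (h : ∀ q ∈ Q, (specGame Tr τ).Win (.attC p q) S) :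
    (specGame Tr τ).Win (.defS p Q) (unitE 3 + S) :=
  .of_defender trivial fun _ _ hm => by
    cases hm with
    | conjStableAnswer hq => exact ⟨S, upd_decU_unitE_add 3 S, h _ hq⟩
    | stableFinishing => exact ⟨S, upd_decU_unitE_add 3 S, win_defC_empty p S⟩

theorem win_defB_of_forall {p p' : Proc} {α : Act} {Q Qα : Set Proc} {f S : Energy}
    (hQ : ∀ q ∈ Q, (specGame Tr τ).Win (.attC p q) S)
    (hQα : ∀ Q', SetOpt Tr τ Qα α Q' → (specGame Tr τ).Win (.att p' Q') f) :
    (specGame Tr τ).Win (.defB p α p' Q Qα)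
      ((unitE 1 + unitE 2) + (((unitE 0 + f) ⊔ onlyAt 5 (1 + f 0)) ⊔ S)) := by
  -- The observation part of the price is the price `x ⊔ onlyAt 5 (x 0)` of a positive conjunct.
  set x := unitE 0 + f
  have hx : x 0 = 1 + f 0 := by simp [x, unitE]
  refine .of_defender trivial fun _ _ hm => ?_
  cases hm with
  | branchAnswer hq =>
    exact ⟨_, upd_dec23 _, (hQ _ hq).mono le_sup_right⟩
  | branchObservation hQ' =>
    obtain ⟨y, hy, hxy⟩ := upd_mono (upd_minU16 x) (le_sup_left (b := S))
    rw [← hx, upd_minU16dec23]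
    have hw : (specGame Tr τ).Win (.attB p' _) x :=
      .attack id .branchAccounting (upd_decU_unitE_add 0 f) (hQα _ hQ')
    exact ⟨y, hy, hw.mono (le_sup_left.trans hxy)⟩

end Game

section Distinction

variable {Proc Act : Type} {Tr : Proc → Act → Proc → Prop} {τ : Act}

theorem exists_distinguishesC_of_not_forall {I : Type} {ps : I → Conjunct Act τ} {p q : Proc}
    (hp : ∀ i, SatC Tr τ p (ps i)) (hq : ¬ ∀ i, SatC Tr τ q (ps i)) :
    ∃ i, DistinguishesC Tr τ (ps i) p q :=
  (not_forall.mp hq).imp fun i hi => ⟨hp i, hi⟩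

theorem Distinguishes.exists_star_distinguishesD {χ : DFormula Act τ} {p : Proc} {Q : Set Proc}
    (h : Distinguishes Tr τ (.delayed χ) p Q) :
    ∃ p', Star Tr τ p p' ∧ DistinguishesD Tr τ χ p' {q' | ∃ q ∈ Q, Star Tr τ q q'} := by
  obtain ⟨⟨p', hpp', hp'⟩, hQ⟩ := h
  exact ⟨p', hpp', hp', fun q' ⟨q, hq, hqq'⟩ hq' => hQ q hq ⟨q', hqq', hq'⟩⟩

theorem DistinguishesD.exists_step_distinguishes {a : Act} {ha : a ≠ τ} {φ : Formula Act τ}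
    {p : Proc} {Q : Set Proc} (h : DistinguishesD Tr τ (.obs a ha φ) p Q) :
    ∃ p', Tr p a p' ∧ Distinguishes Tr τ φ p' {q' | ∃ q ∈ Q, Tr q a q'} := by
  obtain ⟨⟨p', hpp', hp'⟩, hQ⟩ := h
  exact ⟨p', hpp', hp', fun q' ⟨q, hq, hqq'⟩ hq' => hQ q hq ⟨q', hqq', hq'⟩⟩

theorem DistinguishesC.exists_star_distinguishesD_of_pos {χ : DFormula Act τ} {p q : Proc}
    (h : DistinguishesC Tr τ (.pos χ) p q) :
    ∃ p', Star Tr τ p p' ∧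
      DistinguishesD Tr τ χ p' {q' | ∃ q₀ ∈ ({q} : Set Proc), Star Tr τ q₀ q'} := by
  obtain ⟨⟨p', hpp', hp'⟩, hq⟩ := h
  exact ⟨p', hpp', hp', fun q' ⟨_, rfl, hqq'⟩ hq' => hq ⟨q', hqq', hq'⟩⟩

theorem DistinguishesC.exists_star_distinguishesD_of_neg {χ : DFormula Act τ} {p q : Proc}
    (h : DistinguishesC Tr τ (.neg χ) p q) :
    p ≠ q ∧ ∃ q', Star Tr τ q q' ∧
      DistinguishesD Tr τ χ q' {p' | ∃ p₀ ∈ ({p} : Set Proc), Star Tr τ p₀ p'} := by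
  obtain ⟨hp, hq⟩ := h
  obtain ⟨q', hqq', hq'⟩ := not_not.mp hq
  exact ⟨by rintro rfl; exact hp ⟨q', hqq', hq'⟩, q', hqq', hq',
    fun p' ⟨_, rfl, hpp'⟩ hp' => hp ⟨p', hpp', hp'⟩⟩

end Distinction

section Price

variable {Proc Act : Type} {Tr : Proc → Act → Proc → Prop} {τ : Act}

theorem win_attC_iSup_exprC {I : Type} {ps : I → Conjunct Act τ} {p q : Proc}
    (ih : ∀ i, DistinguishesC Tr τ (ps i) p q →
      (specGame Tr τ).Win (.attC p q) (exprC (ps i)))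
    (hp : ∀ i, SatC Tr τ p (ps i)) (hq : ¬ ∀ i, SatC Tr τ q (ps i)) :
    (specGame Tr τ).Win (.attC p q) (⨆ i, exprC (ps i)) :=
  let ⟨i, hi⟩ := exists_distinguishesC_of_not_forall hp hq
  (ih i hi).mono (le_iSup (fun i => exprC (ps i)) i)

theorem win_defB_of_distinguishesD_branchConj {α : Act} {φ' : Formula Act τ} {I : Type}
    {ps : I → Conjunct Act τ} {p p' : Proc} {Q : Set Proc}
    (h : DistinguishesD Tr τ (.branchConj α φ' I ps) p Q) (hp' : Sat Tr τ p' φ')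
    (ihφ : ∀ r R, Distinguishes Tr τ φ' r R → (specGame Tr τ).Win (.att r R) (exprF φ'))
    (ihψ : ∀ i r s, DistinguishesC Tr τ (ps i) r s →
      (specGame Tr τ).Win (.attC r s) (exprC (ps i))) :
    (specGame Tr τ).Win
      (.defB p α p' (Q \ {q ∈ Q | ¬ ∃ q', OptStep Tr τ q α q' ∧ Sat Tr τ q' φ'})
        {q ∈ Q | ¬ ∃ q', OptStep Tr τ q α q' ∧ Sat Tr τ q' φ'})
      (exprE (.branchConj α φ' I ps)) := by
  obtain ⟨⟨-, hp⟩, hQ⟩ := h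
  refine win_defB_of_forall (fun q ⟨hq, hqα⟩ => win_attC_iSup_exprC (ihψ · p q) hp ?_) ?_
  · exact fun hqps => hQ q hq ⟨not_not.mp fun h => hqα ⟨hq, h⟩, hqps⟩
  · rintro _ rfl
    exact ihφ p' _ ⟨hp', fun q' ⟨q, ⟨_, hq⟩, hqq'⟩ hq' => hq ⟨q', hqq', hq'⟩⟩

mutual

theorem Distinguishes.win_att {φ : Formula Act τ} {p : Proc} {Q : Set Proc}
    (h : Distinguishes Tr τ φ p Q) : (specGame Tr τ).Win (.att p Q) (exprF φ) :=
  match φ, h with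
  | .delayed χ, h =>
    let ⟨_, hpp', hχ⟩ := h.exists_star_distinguishesD
    .attack id (.delay rfl) (upd_zeroU _) (win_attD_of_star hpp' hχ.win_attD)
  | .conj I ps, ⟨hp, hQ⟩ => by
    rcases Q.eq_empty_or_nonempty with rfl | hne
    · exact .attack id .finishing (upd_zeroU _) (win_defC_empty p _)
    · obtain ⟨i, -⟩ := not_forall.mp (hQ _ hne.some_mem)
      rw [exprF, iSup_pos ⟨i⟩, add_assoc]
      exact .attack id (.immediateConj hne.ne_empty) (upd_decU_unitE_add 4 _)
        (win_defC_of_forall fun q hq =>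
          win_attC_iSup_exprC (fun _ => DistinguishesC.win_attC) hp (hQ q hq))

theorem DistinguishesD.win_attD {χ : DFormula Act τ} {p : Proc} {Q : Set Proc}
    (h : DistinguishesD Tr τ χ p Q) : (specGame Tr τ).Win (.attD p Q) (exprE χ) :=
  match χ, h with
  | .obs _ ha _, h =>
    let ⟨_, hpp', hφ⟩ := h.exists_step_distinguishes
    .attack id (.observation hpp' ha rfl) (upd_decU_unitE_add 0 _) hφ.win_att
  | .conj I ps, ⟨hp, hQ⟩ => by
    refine .attack id .lateConj (upd_zeroU _) ?_
    rcases Q.eq_empty_or_nonempty with rfl | hne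
    · exact win_defC_empty p _
    · obtain ⟨i, -⟩ := not_forall.mp (hQ _ hne.some_mem)
      rw [exprE, iSup_pos ⟨i⟩]
      exact win_defC_of_forall fun q hq =>
        win_attC_iSup_exprC (fun _ => DistinguishesC.win_attC) hp (hQ q hq)
  | .stableConj I ps, ⟨⟨hstable, hp⟩, hQ⟩ =>
    .attack id (.stableConj hstable) (upd_zeroU _) <| win_defS_of_forall fun q ⟨hq, hqs⟩ =>
      win_attC_iSup_exprC (fun _ => DistinguishesC.win_attC) hp fun hqp => hQ q hq ⟨hqs, hqp⟩
  | .branchConj _ _ _ _, h =>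
    let ⟨⟨⟨_, hpp', hp'⟩, _⟩, _⟩ := h
    .attack id (.branchConj hpp' (Set.sep_subset _ _)) (upd_zeroU _) <|
      win_defB_of_distinguishesD_branchConj h hp' (fun _ _ => Distinguishes.win_att)
        (fun _ _ _ => DistinguishesC.win_attC)

theorem DistinguishesC.win_attC {ψ : Conjunct Act τ} {p q : Proc}
    (h : DistinguishesC Tr τ ψ p q) : (specGame Tr τ).Win (.attC p q) (exprC ψ) :=
  match ψ, h with
  | .pos _, h =>
    let ⟨_, hpp', hχ⟩ := h.exists_star_distinguishesD_of_pos
    .attack id (.posConjunct rfl) (upd_minU16 _)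
      ((win_attD_of_star hpp' hχ.win_attD).mono le_sup_left)
  | .neg _, h =>
    let ⟨hpq, _, hqq', hχ⟩ := h.exists_star_distinguishesD_of_neg
    .attack id (.negConjunct rfl hpq) (upd_minU17dec8 _)
      ((win_attD_of_star hqq' hχ.win_attD).mono le_sup_left)

end

end Price

/-- if a branching conjunction `⋀({(α)φ'} ∪ Ψ)` distinguishes
`p` from `Q`, then for any `p →(α) p'` with `p' ∈ ⟦φ'⟧` and
`Qa = {q ∈ Q | q ∉ ⟦(α)φ'⟧^∧}`, its `expr^ε` price is attacker-winning at
`(p,α,p',Q∖Qa,Qa)^η_d`. -/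
theorem distinction_price_in_win_branching_conjunction {Proc Act : Type}
    (Tr : Proc → Act → Proc → Prop) (τ : Act)
    (α : Act) (φ' : Formula Act τ) (I : Type) (ps : I → Conjunct Act τ)
    (p p' : Proc) (Q Qa : Set Proc)
    (h : DistinguishesD Tr τ (DFormula.branchConj α φ' I ps) p Q)
    (hstep : OptStep Tr τ p α p') (hp' : Sat Tr τ p' φ')
    (hQa : Qa = {q ∈ Q | ¬ ∃ q', OptStep Tr τ q α q' ∧ Sat Tr τ q' φ'}) :
    (specGame Tr τ).Win (.defB p α p' (Q \ Qa) Qa)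
      (exprE (DFormula.branchConj α φ' I ps)) :=
  hQa ▸ win_defB_of_distinguishesD_branchConj h hp' (fun _ _ => Distinguishes.win_att)
    (fun _ _ _ => DistinguishesC.win_attC)

end Spectroscopy
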